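/- arXiv:2602.21925 — 5 statements merged into one kernel-verified Lean document; each statement's English description precedes it below -/
import Mathlib

section
/- Let n ≥ 2 be an integer and Ψ_n(t) = (t^{n+4} − 1)/((n+3)(n+4)) + t²(t^n − 1)/(n(n+1)) − 2t(t^{n+2} − 1)/((n+1)(n+3)). Then for every k with 5 ≤ k ≤ n+4, the k-th derivative of Ψ_n at t = 1 is strictly positive. -/
open Polynomial

private lemma iteratedDeriv_polyeval (k : ℕ) (p : Polynomial ℝ) :
    iteratedDeriv k (fun x : ℝ => p.eval x) = fun x => (derivative^[k] p).eval x := by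
  induction k generalizing p with
  | zero => simp
  | succ k ih =>
    rw [iteratedDeriv_succ', Function.iterate_succ_apply]
    have hd : deriv (fun x : ℝ => p.eval x) = fun x => (derivative p).eval x := by
      funext x; exact Polynomial.deriv (p := p)
    rw [hd, ih]

private lemma desc_rel (m k : ℕ) (hk : k ≤ m + 1) :
    ((m : ℝ) + 1 - k) * ((m + 1).descFactorial k : ℝ)
      = ((m : ℝ) + 1) * (m.descFactorial k : ℝ) := by
  have h := Nat.succ_descFactorial m k
  have h2 := congrArg (fun t : ℕ => (t : ℝ)) h
  push_cast [Nat.cast_sub hk] at h2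
  linarith

theorem stmt_2 (n : ℕ) (hn : 2 ≤ n)
    (Ψ : ℝ → ℝ)
    (hΨ : ∀ t : ℝ, Ψ t = (1 / ((n + 3) * (n + 4))) * (t ^ (n + 4) - 1)
      + (1 / (n * (n + 1))) * t ^ 2 * (t ^ n - 1)
      - (2 / ((n + 1) * (n + 3))) * t * (t ^ (n + 2) - 1)) :
    ∀ k : ℕ, 5 ≤ k → k ≤ n + 4 → 0 < iteratedDeriv k Ψ 1 := by
  intro k hk5 hkn
  set A : ℝ := 1 / ((n + 3) * (n + 4)) with hA
  set B : ℝ := 1 / (n * (n + 1)) with hB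
  set C2 : ℝ := 2 / ((n + 1) * (n + 3)) with hC2
  set P : Polynomial ℝ :=
    C A * X ^ (n + 4) + C B * X ^ (n + 2) - C C2 * X ^ (n + 3)
      - C A - C B * X ^ 2 + C C2 * X ^ 1 with hP
  have hΨP : Ψ = fun t : ℝ => P.eval t := by
    funext t
    rw [hΨ t, hP]
    simp only [eval_add, eval_sub, eval_mul, eval_pow, eval_C, eval_X]
    ring
  have hk0 : 0 < k := by omega
  have hk1 : 2 < k := by omega
  have hd2zero : (Nat.descFactorial 2 k : ℕ) = 0 :=
    Nat.descFactorial_eq_zero_iff_lt.mpr (by omega)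
  have hd1zero : (Nat.descFactorial 1 k : ℕ) = 0 :=
    Nat.descFactorial_eq_zero_iff_lt.mpr (by omega)
  have hval : iteratedDeriv k Ψ 1
      = A * ((n + 4).descFactorial k : ℝ) + B * ((n + 2).descFactorial k : ℝ)
        - C2 * ((n + 3).descFactorial k : ℝ) := by
    rw [hΨP, iteratedDeriv_polyeval]
    have hiter : derivative^[k] P
        = C A * ((((n+4).descFactorial k : ℕ) : ℝ[X]) * X ^ (n + 4 - k))
          + C B * ((((n+2).descFactorial k : ℕ) : ℝ[X]) * X ^ (n + 2 - k))
          - C C2 * ((((n+3).descFactorial k : ℕ) : ℝ[X]) * X ^ (n + 3 - k)) := by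
      rw [hP]
      rw [show C A * X ^ (n + 4) + C B * X ^ (n + 2) - C C2 * X ^ (n + 3)
            - C A - C B * X ^ 2 + C C2 * X ^ 1
          = (((C A * X ^ (n + 4) + C B * X ^ (n + 2)) - C C2 * X ^ (n + 3))
            - (C A + C B * X ^ 2 - C C2 * X ^ 1)) by ring]
      rw [Polynomial.iterate_derivative_sub, Polynomial.iterate_derivative_sub,
        Polynomial.iterate_derivative_sub]
      rw [iterate_map_add derivative k, iterate_map_add derivative k]
      simp only [Polynomial.iterate_derivative_C_mul,
        Polynomial.iterate_derivative_X_pow_eq_natCast_mul,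
        Polynomial.iterate_derivative_C hk0, Polynomial.iterate_derivative_X (R := ℝ) (k := k) (by omega : 1 < k), hd2zero, hd1zero, pow_one]
      push_cast
      ring
    rw [hiter]
    simp [mul_comm]
  rw [hval]
  clear hval hΨP hΨ
  clear hP
  clear P
  clear_value A B C2
  -- Now the arithmetic part
  have hN : (2 : ℝ) ≤ (n : ℝ) := by exact_mod_cast hn
  have hApos : 0 < A := by rw [hA]; positivity
  have hdpos : ∀ a b : ℕ, b ≤ a → (0:ℝ) < (a.descFactorial b : ℝ) := by
    intro a b hb
    have hne : a.descFactorial b ≠ 0 := fun h =>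
      absurd (Nat.descFactorial_eq_zero_iff_lt.mp h) (Nat.not_lt.mpr hb)
    exact_mod_cast Nat.pos_of_ne_zero hne
  rcases eq_or_lt_of_le hkn with hk4 | hk3
  · -- k = n + 4
    subst hk4
    have h3 : (Nat.descFactorial (n+3) (n+4) : ℕ) = 0 :=
      Nat.descFactorial_eq_zero_iff_lt.mpr (by omega)
    have h2 : (Nat.descFactorial (n+2) (n+4) : ℕ) = 0 :=
      Nat.descFactorial_eq_zero_iff_lt.mpr (by omega)
    have h1' : (0:ℝ) < ((n+4).descFactorial (n+4) : ℝ) := hdpos _ _ le_rfl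
    rw [h3, h2]
    push_cast
    nlinarith [mul_pos hApos h1']
  · -- k ≤ n + 3
    have hkn3 : k ≤ n + 3 := by omega
    set x : ℝ := (k : ℝ) with hx
    set d1 : ℝ := ((n+4).descFactorial k : ℝ) with hd1
    set d2 : ℝ := ((n+2).descFactorial k : ℝ) with hd2
    set d3 : ℝ := ((n+3).descFactorial k : ℝ) with hd3
    have hx5 : (5 : ℝ) ≤ x := by rw [hx]; exact_mod_cast hk5
    have hxn : x ≤ (n : ℝ) + 3 := by
      rw [hx]; exact_mod_cast hkn3
    have hd3pos : 0 < d3 := by rw [hd3]; exact hdpos _ _ hkn3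
    have hd1pos : 0 < d1 := by rw [hd1]; exact hdpos _ _ hkn
    have hd2nn : 0 ≤ d2 := by rw [hd2]; positivity
    have r1 : ((n : ℝ) + 4 - x) * d1 = ((n : ℝ) + 4) * d3 := by
      have := desc_rel (n+3) k (by omega)
      have e : n + 3 + 1 = n + 4 := by omega
      rw [e] at this
      rw [hd1, hd3, hx]
      convert this using 2 <;> push_cast <;> ring
    have r2 : ((n : ℝ) + 3 - x) * d3 = ((n : ℝ) + 3) * d2 := by
      have := desc_rel (n+2) k (by omega)
      have e : n + 2 + 1 = n + 3 := by omega
      rw [e] at this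
      rw [hd2, hd3, hx]
      convert this using 2 <;> push_cast <;> ring
    set N : ℝ := (n : ℝ) with hNdef
    clear_value x d1 d2 d3 N
    have key : (N + 4 - x) * (N * (N + 1) * d1 + (N + 3) * (N + 4) * d2
        - 2 * N * (N + 4) * d3) = (N + 4) * d3 * (x - 4) * (x - 3) := by
      linear_combination (N * (N + 1)) * r1 - ((N + 4) * (N + 4 - x)) * r2
    have hxpos : 0 < N + 4 - x := by linarith
    have hrhs : 0 < (N + 4) * d3 * (x - 4) * (x - 3) :=
      mul_pos (mul_pos (mul_pos (by linarith : (0:ℝ) < N + 4) hd3pos)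
        (by linarith : (0:ℝ) < x - 4)) (by linarith : (0:ℝ) < x - 3)
    have hG : 0 < N * (N + 1) * d1 + (N + 3) * (N + 4) * d2 - 2 * N * (N + 4) * d3 := by
      nlinarith [key, hxpos, hrhs]
    have hN0 : (0:ℝ) < N := by linarith
    have hden : 0 < N * (N + 1) * (N + 3) * (N + 4) :=
      mul_pos (mul_pos (mul_pos hN0 (by linarith)) (by linarith)) (by linarith)
    have hAe : A * ((N + 3) * (N + 4)) = 1 := by
      rw [hA]; field_simp
    have hBe : B * (N * (N + 1)) = 1 := by
      rw [hB]; field_simp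
    have hCe : C2 * ((N + 1) * (N + 3)) = 2 := by
      rw [hC2]; field_simp
    have heq : (A * d1 + B * d2 - C2 * d3) * (N * (N + 1) * (N + 3) * (N + 4))
        = N * (N + 1) * d1 + (N + 3) * (N + 4) * d2 - 2 * N * (N + 4) * d3 := by
      linear_combination (d1 * N * (N + 1)) * hAe + (d2 * (N + 3) * (N + 4)) * hBe
        - (d3 * N * (N + 4)) * hCe
    have hfin : A * d1 + B * d2 - C2 * d3
        = (N * (N + 1) * d1 + (N + 3) * (N + 4) * d2 - 2 * N * (N + 4) * d3)
          / (N * (N + 1) * (N + 3) * (N + 4)) := by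
      rw [eq_div_iff (ne_of_gt hden)]; exact heq
    rw [hfin]
    exact div_pos hG hden
end

section
/- Let n ≥ 2 be an integer and Ψ_n(t) = (t^{n+4} − 1)/((n+3)(n+4)) + t²(t^n − 1)/(n(n+1)) − 2t(t^{n+2} − 1)/((n+1)(n+3)). Then Ψ_n(t) > 0 for all real t > 1. -/
/-!
For `n ≠ 0`, `Ψ_n`, `Ψ_n'` and `Ψ_n''` all vanish at `t = 1`, while
`Ψ_n''' t = (n + 2) t^(n-1) (t - 1)^2 > 0` for `t > 1`. A function vanishing at `1` whose
derivative is positive on `(1, ∞)` is positive there; applying this to `Ψ_n''`, `Ψ_n'`, `Ψ_n`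
in turn gives the claim.
-/

open Set

theorem pos_of_hasDerivAt_pos {f f' : ℝ → ℝ} {a : ℝ} (hf : ∀ x, HasDerivAt f (f' x) x)
    (ha : f a = 0) (hf' : ∀ x, a < x → 0 < f' x) (x : ℝ) (hx : a < x) : 0 < f x := by
  have hmono : StrictMonoOn f (Ici a) :=
    strictMonoOn_of_hasDerivWithinAt_pos (convex_Ici a)
      (HasDerivAt.continuousOn fun x _ => hf x) (fun x _ => (hf x).hasDerivWithinAt)
      (fun x hx => hf' x (by rwa [interior_Ici] at hx))
  simpa [ha] using hmono self_mem_Ici hx.le hx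

noncomputable section

variable (n : ℕ)

def psi (t : ℝ) : ℝ :=
  (1 / ((n + 3) * (n + 4))) * (t ^ (n + 4) - 1)
    + (1 / (n * (n + 1))) * t ^ 2 * (t ^ n - 1)
    - (2 / ((n + 1) * (n + 3))) * t * (t ^ (n + 2) - 1)

def psiDeriv (t : ℝ) : ℝ :=
  t ^ (n + 3) / (n + 3) + (n + 2) / (n * (n + 1)) * t ^ (n + 1) - 2 / (n * (n + 1)) * t
    - 2 / (n + 1) * t ^ (n + 2) + 2 / ((n + 1) * (n + 3))

def psiDeriv2 (t : ℝ) : ℝ :=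
  t ^ (n + 2) + (n + 2) / n * t ^ n - 2 * (n + 2) / (n + 1) * t ^ (n + 1) - 2 / (n * (n + 1))

variable {n}

theorem hasDerivAt_psi (t : ℝ) : HasDerivAt (psi n) (psiDeriv n t) t := by
  have h := ((((hasDerivAt_pow (n + 4) t).sub_const 1).const_mul (1 / ((n + 3) * (n + 4) : ℝ))).add
    (((hasDerivAt_pow (n + 2) t).sub (hasDerivAt_pow 2 t)).const_mul (1 / (n * (n + 1) : ℝ)))).sub
    (((hasDerivAt_pow (n + 3) t).sub (hasDerivAt_id t)).const_mul (2 / ((n + 1) * (n + 3) : ℝ)))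
  refine (h.congr_deriv ?_).congr_of_eventuallyEq (.of_forall fun s => ?_)
  · simp only [psiDeriv]
    push_cast
    field_simp
    ring
  · simp only [psi, Pi.add_apply, Pi.sub_apply, id]
    ring

theorem hasDerivAt_psiDeriv (hn : n ≠ 0) (t : ℝ) :
    HasDerivAt (psiDeriv n) (psiDeriv2 n t) t := by
  have h := (((((hasDerivAt_pow (n + 3) t).div_const (n + 3 : ℝ)).add
    ((hasDerivAt_pow (n + 1) t).const_mul ((n + 2) / (n * (n + 1)) : ℝ))).sub
    ((hasDerivAt_id t).const_mul (2 / (n * (n + 1)) : ℝ))).sub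
    ((hasDerivAt_pow (n + 2) t).const_mul (2 / (n + 1) : ℝ))).add_const
    (2 / ((n + 1) * (n + 3)) : ℝ)
  refine (h.congr_deriv ?_).congr_of_eventuallyEq (.of_forall fun s => ?_)
  · obtain ⟨k, rfl⟩ := Nat.exists_eq_succ_of_ne_zero hn
    simp only [psiDeriv2]
    push_cast
    field_simp
    ring
  · simp only [psiDeriv, Pi.add_apply, Pi.sub_apply, id]

theorem hasDerivAt_psiDeriv2 (hn : n ≠ 0) (t : ℝ) :
    HasDerivAt (psiDeriv2 n) ((n + 2) * t ^ (n - 1) * (t - 1) ^ 2) t := by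
  have h := (((hasDerivAt_pow (n + 2) t).add
    ((hasDerivAt_pow n t).const_mul ((n + 2) / n : ℝ))).sub
    ((hasDerivAt_pow (n + 1) t).const_mul (2 * (n + 2) / (n + 1) : ℝ))).sub_const
    (2 / (n * (n + 1)) : ℝ)
  refine (h.congr_deriv ?_).congr_of_eventuallyEq (.of_forall fun s => rfl)
  obtain ⟨k, rfl⟩ := Nat.exists_eq_succ_of_ne_zero hn
  push_cast
  field_simp
  ring

theorem psi_one : psi n 1 = 0 := by
  simp [psi]

theorem psiDeriv_one (hn : n ≠ 0) : psiDeriv n 1 = 0 := by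
  simp only [psiDeriv, one_pow, mul_one]
  field_simp
  ring

theorem psiDeriv2_one (hn : n ≠ 0) : psiDeriv2 n 1 = 0 := by
  simp only [psiDeriv2, one_pow, mul_one]
  field_simp
  ring

end

theorem stmt_3 (n : ℕ) (hn : 2 ≤ n)
    (Ψ : ℝ → ℝ)
    (hΨ : ∀ t : ℝ, Ψ t = (1 / ((n + 3) * (n + 4))) * (t ^ (n + 4) - 1)
      + (1 / (n * (n + 1))) * t ^ 2 * (t ^ n - 1)
      - (2 / ((n + 1) * (n + 3))) * t * (t ^ (n + 2) - 1)) :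
    ∀ t : ℝ, 1 < t → 0 < Ψ t := by
  have hn₀ : n ≠ 0 := by omega
  have hΨ_eq : Ψ = psi n := funext hΨ
  have h₂ : ∀ x : ℝ, 1 < x → 0 < psiDeriv2 n x :=
    pos_of_hasDerivAt_pos (hasDerivAt_psiDeriv2 hn₀) (psiDeriv2_one hn₀) fun x hx => by
      have := sub_pos.2 hx
      have := one_pos.trans hx
      positivity
  have h₁ := pos_of_hasDerivAt_pos (hasDerivAt_psiDeriv hn₀) (psiDeriv_one hn₀) h₂
  exact hΨ_eq ▸ pos_of_hasDerivAt_pos hasDerivAt_psi psi_one h₁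
end

section
/- Let n ≥ 2 be an integer and define Ψ̃_n(t) = n t^{n+2} − (n+2) t^{n+1} + (n+2) t − n. Then for all real t, Ψ̃_n(t) = Σ_{α=2}^{n+2} C(n+2, α) (α − 2) (t − 1)^α, where C denotes the binomial coefficient. -/
lemma sum_binom (m : ℕ) (s : ℝ) :
    ∑ α ∈ Finset.range (m + 1), (m.choose α : ℝ) * s ^ α = (s + 1) ^ m := by
  rw [add_pow]
  exact Finset.sum_congr rfl fun k _ => by ring

lemma sum_binom_mul (m : ℕ) (s : ℝ) :
    ∑ α ∈ Finset.range (m + 2), ((m + 1).choose α : ℝ) * (α : ℝ) * s ^ α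
      = (m + 1) * s * (s + 1) ^ m := by
  rw [Finset.sum_range_succ']
  simp only [Nat.cast_zero, mul_zero, zero_mul, pow_zero, add_zero]
  have key : ∀ α : ℕ, ((m + 1).choose (α + 1) : ℝ) * ((α : ℝ) + 1)
      = (m + 1) * (m.choose α : ℝ) := by
    intro α
    have := Nat.add_one_mul_choose_eq m α
    have : ((m + 1) * m.choose α : ℕ) = ((m + 1).choose (α + 1) * (α + 1) : ℕ) := this
    have h2 := congrArg (Nat.cast (R := ℝ)) this
    push_cast at h2
    linarith
  push_cast
  calc ∑ α ∈ Finset.range (m + 1), ((m + 1).choose (α + 1) : ℝ) * ((α : ℝ) + 1) * s ^ (α + 1)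
      = ∑ α ∈ Finset.range (m + 1), (m + 1) * s * ((m.choose α : ℝ) * s ^ α) := by
        refine Finset.sum_congr rfl fun α _ => ?_
        rw [key α]; ring
    _ = (m + 1) * s * (s + 1) ^ m := by
        rw [← Finset.mul_sum, sum_binom]

theorem stmt_4 (n : ℕ) (hn : 2 ≤ n) (t : ℝ) :
    (n : ℝ) * t ^ (n + 2) - (n + 2) * t ^ (n + 1) + (n + 2) * t - n
      = ∑ α ∈ Finset.Icc 2 (n + 2), ((n + 2).choose α : ℝ) * ((α : ℝ) - 2) * (t - 1) ^ α := by
  set s : ℝ := t - 1 with hs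
  have ht : t = s + 1 := by rw [hs]; ring
  have hset : Finset.range (n + 3) = insert 0 (insert 1 (Finset.Icc 2 (n + 2))) := by
    ext x; simp; omega
  have hfull : ∑ α ∈ Finset.range (n + 3), ((n + 2).choose α : ℝ) * ((α : ℝ) - 2) * s ^ α
      = ∑ α ∈ Finset.Icc 2 (n + 2), ((n + 2).choose α : ℝ) * ((α : ℝ) - 2) * s ^ α
        + (-2) + (-(n + 2)) * s := by
    rw [hset, Finset.sum_insert (by simp), Finset.sum_insert (by simp)]
    simp [Nat.choose_one_right]
    push_cast
    ring
  have hsplit : ∑ α ∈ Finset.range (n + 3), ((n + 2).choose α : ℝ) * ((α : ℝ) - 2) * s ^ α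
      = (∑ α ∈ Finset.range (n + 3), ((n + 2).choose α : ℝ) * (α : ℝ) * s ^ α)
        - 2 * ∑ α ∈ Finset.range (n + 3), ((n + 2).choose α : ℝ) * s ^ α := by
    rw [Finset.mul_sum, ← Finset.sum_sub_distrib]
    exact Finset.sum_congr rfl fun α _ => by ring
  have h1 : ∑ α ∈ Finset.range (n + 3), ((n + 2).choose α : ℝ) * (α : ℝ) * s ^ α
      = (n + 2) * s * (s + 1) ^ (n + 1) := by
    have := sum_binom_mul (n + 1) s
    push_cast at this ⊢
    convert this using 2 <;> ring_nf
  have h2 : ∑ α ∈ Finset.range (n + 3), ((n + 2).choose α : ℝ) * s ^ α = (s + 1) ^ (n + 2) := by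
    exact sum_binom (n + 2) s
  have : ∑ α ∈ Finset.Icc 2 (n + 2), ((n + 2).choose α : ℝ) * ((α : ℝ) - 2) * s ^ α
      = (n + 2) * s * (s + 1) ^ (n + 1) - 2 * (s + 1) ^ (n + 2) + 2 + (n + 2) * s := by
    have := hfull
    rw [hsplit, h1, h2] at this
    linarith
  rw [this, ht]
  ring
end

section
/- Let n ≥ 2 be an integer and 0 < R₁ < R₂. Then the 3×3 matrix M with rows (1, R₁, R₁²), (1, R₂, R₂²), ((R₂ⁿ − R₁ⁿ)/n, (R₂^{n+1} − R₁^{n+1})/(n+1), (R₂^{n+2} − R₁^{n+2})/(n+2)) is invertible; in fact its determinant equals (R₁^{n+2}/(n(n+1)(n+2)))·Ψ̃_n(R₂/R₁)·(R₂ − R₁) up to sign, where Ψ̃_n(t) = n t^{n+2} − (n+2) t^{n+1} + (n+2) t − n, and in particular det M ≠ 0. -/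
/-!
Expanding along the first two rows, `det M` is, up to the factor `-(R₂ - R₁) / (n (n+1) (n+2))`,
the homogeneous form `R₁^(n+2) Ψ̃_n(R₂/R₁)`. Positivity of `Ψ̃_n` on `t > 1` comes from the
recursion `Ψ̃_(m+1)(t) = t Ψ̃_m(t) + (t - 1)(t^(m+2) - (m+2) t + (m+1))`, whose second summand is
nonnegative by Bernoulli's inequality, starting from `Ψ̃_1(t) = (t - 1)^3`.
-/

def psiTilde (n : ℕ) (t : ℝ) : ℝ :=
  n * t ^ (n + 2) - (n + 2) * t ^ (n + 1) + (n + 2) * t - n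

lemma psiTilde_one (t : ℝ) : psiTilde 1 t = (t - 1) ^ 3 := by
  simp only [psiTilde]; push_cast; ring

lemma psiTilde_succ (m : ℕ) (t : ℝ) :
    psiTilde (m + 1) t = t * psiTilde m t + (t - 1) * (t ^ (m + 2) - (m + 2) * t + (m + 1)) := by
  simp only [psiTilde]; push_cast; ring

lemma pow_succ_sub_mul_add_nonneg {t : ℝ} (ht : 1 ≤ t) (k : ℕ) :
    0 ≤ t ^ (k + 1) - (k + 1) * t + k := by
  have h := one_add_mul_le_pow (a := t - 1) (by linarith) (k + 1)
  rw [add_sub_cancel] at h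
  push_cast at h
  linarith

lemma psiTilde_pos {n : ℕ} (hn : 1 ≤ n) {t : ℝ} (ht : 1 < t) : 0 < psiTilde n t := by
  induction n, hn using Nat.le_induction with
  | base => rw [psiTilde_one]; exact pow_pos (sub_pos.mpr ht) 3
  | succ m _ ih =>
    have hB := pow_succ_sub_mul_add_nonneg ht.le (m + 1)
    push_cast at hB
    rw [psiTilde_succ]
    nlinarith [mul_pos (zero_lt_one.trans ht) ih, mul_nonneg (sub_pos.mpr ht).le hB]

lemma pow_mul_psiTilde_div {R₁ : ℝ} (hR₁ : R₁ ≠ 0) (n : ℕ) (R₂ : ℝ) :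
    R₁ ^ (n + 2) * psiTilde n (R₂ / R₁) =
      n * R₂ ^ (n + 2) - (n + 2) * R₂ ^ (n + 1) * R₁ + (n + 2) * R₂ * R₁ ^ (n + 1)
        - n * R₁ ^ (n + 2) := by
  simp only [psiTilde, div_pow]
  field_simp
  ring

lemma det_moment_matrix {n : ℕ} (hn : n ≠ 0) (R₁ R₂ : ℝ) :
    (!![1, R₁, R₁ ^ 2;
        1, R₂, R₂ ^ 2;
        (R₂ ^ n - R₁ ^ n) / n, (R₂ ^ (n + 1) - R₁ ^ (n + 1)) / (n + 1),
          (R₂ ^ (n + 2) - R₁ ^ (n + 2)) / (n + 2)] : Matrix (Fin 3) (Fin 3) ℝ).det =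
      -((n * R₂ ^ (n + 2) - (n + 2) * R₂ ^ (n + 1) * R₁ + (n + 2) * R₂ * R₁ ^ (n + 1)
        - n * R₁ ^ (n + 2)) / ((n : ℝ) * (n + 1) * (n + 2)) * (R₂ - R₁)) := by
  have : (n : ℝ) ≠ 0 := Nat.cast_ne_zero.mpr hn
  rw [Matrix.det_fin_three]
  simp only [Matrix.of_apply, Matrix.cons_val', Matrix.cons_val_zero, Matrix.cons_val_one,
    Matrix.cons_val_two, Matrix.head_cons, Matrix.tail_cons, Matrix.empty_val',
    Matrix.cons_val_fin_one, Matrix.head_fin_const]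
  field_simp
  ring

theorem stmt_6 (n : ℕ) (hn : 2 ≤ n) (R₁ R₂ : ℝ) (h1 : 0 < R₁) (h12 : R₁ < R₂)
    (M : Matrix (Fin 3) (Fin 3) ℝ)
    (hM : M = !![1, R₁, R₁ ^ 2;
                 1, R₂, R₂ ^ 2;
                 (R₂ ^ n - R₁ ^ n) / n, (R₂ ^ (n + 1) - R₁ ^ (n + 1)) / (n + 1),
                   (R₂ ^ (n + 2) - R₁ ^ (n + 2)) / (n + 2)])
    (Ψ' : ℝ → ℝ)
    (hΨ' : ∀ t : ℝ, Ψ' t = (n : ℝ) * t ^ (n + 2) - (n + 2) * t ^ (n + 1) + (n + 2) * t - n) :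
    IsUnit M ∧
      (M.det = (R₁ ^ (n + 2) / ((n : ℝ) * (n + 1) * (n + 2))) * Ψ' (R₂ / R₁) * (R₂ - R₁) ∨
        M.det = -((R₁ ^ (n + 2) / ((n : ℝ) * (n + 1) * (n + 2))) * Ψ' (R₂ / R₁) * (R₂ - R₁))) ∧
      M.det ≠ 0 := by
  have hΨ : Ψ' = psiTilde n := funext hΨ'
  subst hM hΨ
  have hdet := det_moment_matrix (by omega : n ≠ 0) R₁ R₂
  rw [← pow_mul_psiTilde_div h1.ne', mul_div_right_comm] at hdet
  have hpos : 0 < R₁ ^ (n + 2) / ((n : ℝ) * (n + 1) * (n + 2)) * psiTilde n (R₂ / R₁) * (R₂ - R₁) :=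
    have : (0 : ℝ) < n := by exact_mod_cast (by omega : 0 < n)
    mul_pos (mul_pos (by positivity) (psiTilde_pos (by omega) ((one_lt_div h1).mpr h12)))
      (sub_pos.mpr h12)
  have hne : _ ≠ (0 : ℝ) := hdet ▸ neg_ne_zero.mpr hpos.ne'
  exact ⟨(Matrix.isUnit_iff_isUnit_det _).mpr hne.isUnit, Or.inr hdet, hne⟩
end

section
/- Let n ≥ 2 be an integer, 0 < R₁ < R₂, and A₁₀, A₁₁, A₂₀, A₂₁ ∈ ℝ. Then there exist unique real numbers c₀, c₁, c₂, c₃, c₄ such that the polynomial Q(ρ) = Σ_{α=0}^{4} c_α ρ^α satisfies Q(R₁) = A₁₀, Q(R₂) = A₂₀, Q'(R₁) = A₁₁, Q'(R₂) = A₂₁, and Σ_{α=0}^{4} c_α (R₂^{n+α} − R₁^{n+α})/(n+α) = 0. -/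
/-!
The five conditions are linear in `c` (the last one is `∫_{R₁}^{R₂} Q(ρ) ρ^(n-1) dρ = 0`), so for
this square system uniqueness implies existence, and it suffices that the homogeneous system has
only the trivial solution. A polynomial `Q` of degree at most four with double roots at `R₁` and
`R₂` is `k (X - R₁)² (X - R₂)²`, whose integral against the positive weight `ρ^(n-1)` has the
sign of `k`; hence the vanishing moment forces `k = 0`.
-/

open Polynomial intervalIntegral Set

namespace Polynomial

theorem eval_ofFn {R : Type*} [CommSemiring R] [DecidableEq R] {N : ℕ} (c : Fin N → R) (x : R) :
    (ofFn N c).eval x = ∑ α : Fin N, c α * x ^ (α : ℕ) := by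
  simp [ofFn_eq_sum_monomial, eval_finsetSum]

theorem integral_eval_ofFn_mul_pow_pred {N n : ℕ} (hn : n ≠ 0) (c : Fin N → ℝ) (a b : ℝ) :
    ∫ x in a..b, (ofFn N c).eval x * x ^ (n - 1)
      = ∑ α : Fin N, c α * (b ^ (n + (α : ℕ)) - a ^ (n + (α : ℕ))) / (n + (α : ℕ)) := by
  simp_rw [eval_ofFn, Finset.sum_mul, mul_assoc, ← pow_add]
  rw [integral_finsetSum fun α _ => by apply Continuous.intervalIntegrable; fun_prop]
  refine Finset.sum_congr rfl fun α _ => ?_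
  have hexp : (α : ℕ) + (n - 1) + 1 = n + α := by omega
  have hden : (((α : ℕ) + (n - 1) : ℕ) : ℝ) + 1 = n + (α : ℕ) := by exact_mod_cast hexp
  rw [integral_const_mul, integral_pow, hexp, hden, mul_div_assoc]

theorem sq_X_sub_C_dvd_of_isRoot_of_isRoot_derivative {R : Type*} [CommRing R] {p : R[X]} {a : R}
    (h : p.IsRoot a) (h' : p.derivative.IsRoot a) : (X - C a) ^ 2 ∣ p := by
  rcases eq_or_ne p 0 with rfl | hp
  · exact dvd_zero _
  · exact (le_rootMultiplicity_iff hp).1 ((one_lt_rootMultiplicity_iff_isRoot hp).2 ⟨h, h'⟩)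

end Polynomial

theorem eq_zero_of_double_roots_of_integral_mul_eq_zero {p : ℝ[X]} {a b : ℝ} {w : ℝ → ℝ}
    (hab : a < b) (hdeg : p.natDegree ≤ 4) (ha : p.IsRoot a) (ha' : p.derivative.IsRoot a)
    (hb : p.IsRoot b) (hb' : p.derivative.IsRoot b) (hw : ContinuousOn w (Icc a b))
    (hw_pos : ∀ x ∈ Ioo a b, 0 < w x) (hint : ∫ x in a..b, p.eval x * w x = 0) : p = 0 := by
  set S : ℝ[X] := (X - C a) ^ 2 * (X - C b) ^ 2
  have hS : S.Monic := ((monic_X_sub_C a).pow 2).mul ((monic_X_sub_C b).pow 2)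
  have hSdeg : S.natDegree = 4 := by
    simp only [S, ((monic_X_sub_C a).pow 2).natDegree_mul ((monic_X_sub_C b).pow 2),
      natDegree_pow, natDegree_X_sub_C]
  have hcop : IsCoprime ((X - C a) ^ 2) ((X - C b) ^ 2) :=
    (isCoprime_X_sub_C_of_isUnit_sub (sub_ne_zero.2 hab.ne).isUnit).pow
  obtain ⟨k, hp⟩ : ∃ k, p = C k * S := ⟨_, eq_leadingCoeff_mul_of_monic_of_dvd_of_natDegree_le hS
      (hcop.mul_dvd (sq_X_sub_C_dvd_of_isRoot_of_isRoot_derivative ha ha')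
        (sq_X_sub_C_dvd_of_isRoot_of_isRoot_derivative hb hb')) (hSdeg ▸ hdeg)⟩
  have hSpos : 0 < ∫ x in a..b, S.eval x * w x := by
    refine intervalIntegral_pos_of_pos_on ?_ (fun x hx => mul_pos ?_ (hw_pos x hx)) hab
    · exact (S.continuous.continuousOn.mul hw).intervalIntegrable_of_Icc hab.le
    · simp only [S, eval_mul, eval_pow, eval_sub, eval_X, eval_C]
      exact mul_pos (pow_pos (sub_pos.2 hx.1) 2) (sq_pos_of_neg (sub_neg.2 hx.2))
  have hk : k * ∫ x in a..b, S.eval x * w x = 0 := by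
    rw [← integral_const_mul, ← hint, hp]
    simp only [eval_mul, eval_C, mul_assoc]
  rw [hp, (mul_eq_zero.1 hk).resolve_right hSpos.ne', C_0, zero_mul]

noncomputable def momentFunctional (m : ℕ) (a b : ℝ) : ℝ[X] →ₗ[ℝ] ℝ where
  toFun p := ∫ x in a..b, p.eval x * x ^ m
  map_add' p q := by
    simp only [eval_add, add_mul]
    exact integral_add (by apply Continuous.intervalIntegrable; fun_prop)
      (by apply Continuous.intervalIntegrable; fun_prop)
  map_smul' r p := by
    simp only [eval_smul, smul_eq_mul, mul_assoc, integral_const_mul, RingHom.id_apply]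

noncomputable def hermiteMomentData (m : ℕ) (a b : ℝ) : ℝ[X] →ₗ[ℝ] Fin 5 → ℝ :=
  LinearMap.pi ![leval a, leval b, leval a ∘ₗ derivative, leval b ∘ₗ derivative,
    momentFunctional m a b]

theorem injective_hermiteMomentData_comp_ofFn {m : ℕ} {a b : ℝ} (ha : 0 < a) (hab : a < b) :
    Function.Injective (hermiteMomentData m a b ∘ₗ ofFn 5) := by
  rw [← LinearMap.ker_eq_bot, LinearMap.ker_eq_bot']
  intro c hc
  have hdata := congrFun hc
  refine injective_ofFn 5 (.trans ?_ (map_zero _).symm)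
  exact eq_zero_of_double_roots_of_integral_mul_eq_zero hab
    (Nat.lt_succ_iff.1 (ofFn_natDegree_lt (by norm_num) c)) (hdata 0) (hdata 2) (hdata 1)
    (hdata 3) (continuous_pow m).continuousOn (fun x hx => pow_pos (ha.trans hx.1) m) (hdata 4)

theorem stmt_8 (n : ℕ) (hn : 2 ≤ n) (R₁ R₂ : ℝ) (h1 : 0 < R₁) (h12 : R₁ < R₂)
    (A₁₀ A₁₁ A₂₀ A₂₁ : ℝ) :
    ∃! c : Fin 5 → ℝ,
      (∑ α : Fin 5, c α * R₁ ^ (α : ℕ)) = A₁₀ ∧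
      (∑ α : Fin 5, c α * R₂ ^ (α : ℕ)) = A₂₀ ∧
      deriv (fun ρ : ℝ => ∑ α : Fin 5, c α * ρ ^ (α : ℕ)) R₁ = A₁₁ ∧
      deriv (fun ρ : ℝ => ∑ α : Fin 5, c α * ρ ^ (α : ℕ)) R₂ = A₂₁ ∧
      (∑ α : Fin 5, c α * (R₂ ^ (n + (α : ℕ)) - R₁ ^ (n + (α : ℕ))) / (n + (α : ℕ))) = 0 := by
  have hinj := injective_hermiteMomentData_comp_ofFn (m := n - 1) h1 h12
  have hbij : Function.Bijective (hermiteMomentData (n - 1) R₁ R₂ ∘ₗ ofFn 5) :=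
    ⟨hinj, LinearMap.injective_iff_surjective.1 hinj⟩
  refine (existsUnique_congr fun c => ?_).2 (hbij.existsUnique ![A₁₀, A₂₀, A₁₁, A₂₁, 0])
  simp only [← eval_ofFn, Polynomial.deriv,
    ← integral_eval_ofFn_mul_pow_pred (by omega : n ≠ 0), funext_iff, Fin.forall_fin_succ]
  simp [hermiteMomentData, momentFunctional]
end
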